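/- Let $E\subset\mathbb{R}^d$ be Lebesgue measurable with $\mathcal{L}(E)>0$ and let $t\ge 0$. Then $\mathcal{H}_\infty^t(E) \ge g_t(E)$, where $g_t(E) = \mathcal{L}(E)^2 / I_t(E)$ and $I_t(E) = \iint_{E\times E} |x-y|^{-t}\, d\mathcal{L}(x)\, d\mathcal{L}(y)$. -/

import Mathlib

open MeasureTheory Filter Set
open scoped ENNReal NNReal

/-- The `t`-dimensional Hausdorff content of a set. -/
noncomputable def hContent {X : Type*} [EMetricSpace X] (t : ℝ) (F : Set X) : ℝ≥0∞ :=
  ⨅ (C : ℕ → Set X) (_ : F ⊆ ⋃ n, C n), ∑' n, EMetric.diam (C n) ^ t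

/-- The `t`-energy of a measure: `∬ |x-y|^{-t} dμ dμ`. -/
noncomputable def energy {X : Type*} [EMetricSpace X] [MeasurableSpace X] (t : ℝ) (μ : Measure X) : ℝ≥0∞ :=
  ∫⁻ x, ∫⁻ y, edist x y ^ (-t) ∂μ ∂μ

/-!
Let `μ` be Lebesgue measure restricted to `E` and let `(Cₙ)` cover `E`. The sets
`Dₙ = closure Cₙ \ ⋃_{m<n} closure Cₘ` are Borel, pairwise disjoint, and cover `E`. On `Dₙ × Dₙ`
we have `|x - y|^{-t} ≥ diam(Cₙ)^{-t}`, so `μ(Dₙ)² ≤ diam(Cₙ)^t · I_t(μ|Dₙ)`. By Cauchy–Schwarz,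
`μ(E)² = (∑ μ(Dₙ))² ≤ (∑ diam(Cₙ)^t) · ∑ I_t(μ|Dₙ) ≤ (∑ diam(Cₙ)^t) · I_t(μ)`, using that the
local energies add up to at most the total one.
-/

namespace ENNReal

theorem tsum_sq_le_tsum_mul_tsum {ι : Type*} {a b c : ι → ℝ≥0∞}
    (h : ∀ i, a i ^ 2 ≤ b i * c i) : (∑' i, a i) ^ 2 ≤ (∑' i, b i) * ∑' i, c i := by
  let _ : MeasurableSpace ι := ⊤
  have sq_sqrt : ∀ x : ℝ≥0∞, (x ^ (2⁻¹ : ℝ)) ^ (2 : ℝ) = x := fun x => by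
    rw [← ENNReal.rpow_mul]; norm_num
  have ha : ∀ i, a i ≤ b i ^ (2⁻¹ : ℝ) * c i ^ (2⁻¹ : ℝ) := fun i => by
    rw [← ENNReal.mul_rpow_of_nonneg _ _ (by norm_num), ← ENNReal.rpow_le_rpow_iff two_pos,
      sq_sqrt, ENNReal.rpow_two]
    exact h i
  have holder := ENNReal.lintegral_mul_le_Lp_mul_Lq Measure.count
    Real.HolderConjugate.two_two (f := fun i => b i ^ (2⁻¹ : ℝ)) (g := fun i => c i ^ (2⁻¹ : ℝ))
    measurable_from_top.aemeasurable measurable_from_top.aemeasurable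
  simp only [lintegral_count, Pi.mul_apply, sq_sqrt] at holder
  calc (∑' i, a i) ^ 2 ≤ ((∑' i, b i) ^ (2⁻¹ : ℝ) * (∑' i, c i) ^ (2⁻¹ : ℝ)) ^ (2 : ℝ) := by
        rw [ENNReal.rpow_two]
        gcongr
        exact (ENNReal.tsum_le_tsum ha).trans (by simpa only [one_div] using holder)
    _ = (∑' i, b i) * ∑' i, c i := by
        rw [ENNReal.mul_rpow_of_nonneg _ _ zero_le_two, sq_sqrt, sq_sqrt]

theorem one_le_rpow_mul_rpow_neg {a b : ℝ≥0∞} {t : ℝ} (ha : a ≠ ⊤) (hab : a ≤ b) (ht : 0 ≤ t)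
    (hb : b ^ t ≠ 0) : 1 ≤ b ^ t * a ^ (-t) := by
  rcases eq_or_ne a 0 with rfl | ha₀
  · rcases ht.eq_or_lt with rfl | ht
    · simp
    · rw [ENNReal.zero_rpow_of_neg (by linarith), ENNReal.mul_top hb]
      exact le_top
  · calc 1 = a ^ t * a ^ (-t) := by rw [← ENNReal.rpow_add _ _ ha₀ ha]; simp
      _ ≤ b ^ t * a ^ (-t) := by gcongr

end ENNReal

section Energy

variable {X : Type*}

theorem tsum_energy_restrict_le [EMetricSpace X] [MeasurableSpace X] {ι : Type*} [Countable ι]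
    (t : ℝ) (μ : Measure X) {D : ι → Set X} (hD : ∀ i, MeasurableSet (D i))
    (hdisj : Pairwise (Function.onFun Disjoint D)) :
    ∑' i, energy t (μ.restrict (D i)) ≤ energy t μ :=
  calc ∑' i, energy t (μ.restrict (D i))
      ≤ ∑' i, ∫⁻ x in D i, ∫⁻ y, edist x y ^ (-t) ∂μ ∂μ :=
        ENNReal.tsum_le_tsum fun _ => lintegral_mono fun _ =>
          lintegral_mono' Measure.restrict_le_self le_rfl
    _ = ∫⁻ x in ⋃ i, D i, ∫⁻ y, edist x y ^ (-t) ∂μ ∂μ := (lintegral_iUnion hD hdisj _).symm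
    _ ≤ energy t μ := setLIntegral_le_lintegral _ _

variable [MetricSpace X] [MeasurableSpace X] [OpensMeasurableSpace X] [SecondCountableTopology X]
  {μ : Measure X} [SFinite μ] {t : ℝ}

theorem measure_sq_le_ediam_rpow_mul_energy_restrict (ht : 0 ≤ t) {D : Set X}
    (hD : MeasurableSet D) (hfin : energy t (μ.restrict D) ≠ ⊤) :
    μ D ^ 2 ≤ Metric.ediam D ^ t * energy t (μ.restrict D) := by
  rcases eq_or_ne (Metric.ediam D ^ t) 0 with hb | hb
  · -- `D` is at most a point, where the kernel is `⊤`, so finite energy forces `μ D = 0`.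
    obtain ⟨hdiam, htpos⟩ : Metric.ediam D = 0 ∧ 0 < t := by
      rcases ENNReal.rpow_eq_zero_iff.1 hb with h | ⟨_, h⟩
      exacts [h, absurd h ht.not_gt]
    have hatom : ⊤ * μ D ^ 2 ≤ energy t (μ.restrict D) :=
      calc ⊤ * μ D ^ 2 = ∫⁻ x in D, ∫⁻ y in D, ⊤ ∂μ ∂μ := by simp [sq, mul_assoc]
        _ ≤ energy t (μ.restrict D) :=
          setLIntegral_mono' hD fun x hx => setLIntegral_mono' hD fun y hy => by
            rw [Metric.ediam_eq_zero_iff.1 hdiam hx hy, edist_self,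
              ENNReal.zero_rpow_of_neg (neg_neg_of_pos htpos)]
    have hnull : μ D = 0 := by
      by_contra h
      exact hfin (top_le_iff.1 (hatom.trans' (by simp [h])))
    simp [hnull]
  have hk : Measurable fun p : X × X => edist p.1 p.2 ^ (-t) :=
    measurable_edist.pow_const _
  calc μ D ^ 2 = ∫⁻ x in D, ∫⁻ y in D, 1 ∂μ ∂μ := by simp [sq]
    _ ≤ ∫⁻ x in D, ∫⁻ y in D, Metric.ediam D ^ t * edist x y ^ (-t) ∂μ ∂μ :=
        setLIntegral_mono' hD fun x hx => setLIntegral_mono' hD fun y hy =>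
          ENNReal.one_le_rpow_mul_rpow_neg (edist_ne_top x y)
            (Metric.edist_le_ediam_of_mem hx hy) ht hb
    _ = ∫⁻ x in D, Metric.ediam D ^ t * ∫⁻ y in D, edist x y ^ (-t) ∂μ ∂μ :=
        lintegral_congr fun _ => lintegral_const_mul _ (measurable_edist_right.pow_const _)
    _ = Metric.ediam D ^ t * energy t (μ.restrict D) :=
        lintegral_const_mul _ hk.lintegral_prod_right'

theorem measure_univ_sq_le_tsum_ediam_rpow_mul_energy (ht : 0 ≤ t) {B : ℕ → Set X}
    (hB : ∀ n, MeasurableSet (B n)) (hcover : μ (⋃ n, B n)ᶜ = 0) (hfin : energy t μ ≠ ⊤) :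
    μ univ ^ 2 ≤ (∑' n, Metric.ediam (B n) ^ t) * energy t μ := by
  have hD : ∀ n, MeasurableSet (disjointed B n) := .disjointed hB
  have hsum := tsum_energy_restrict_le t μ hD (disjoint_disjointed B)
  have huniv : μ univ = ∑' n, μ (disjointed B n) := by
    rw [← measure_iUnion (disjoint_disjointed B) hD, iUnion_disjointed]
    exact (measure_congr (ae_eq_univ.2 hcover)).symm
  calc μ univ ^ 2 = (∑' n, μ (disjointed B n)) ^ 2 := by rw [huniv]
    _ ≤ (∑' n, Metric.ediam (B n) ^ t) * ∑' n, energy t (μ.restrict (disjointed B n)) :=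
        ENNReal.tsum_sq_le_tsum_mul_tsum fun n =>
          (measure_sq_le_ediam_rpow_mul_energy_restrict ht (hD n)
            (ne_top_of_le_ne_top hfin ((ENNReal.le_tsum n).trans hsum))).trans <| by
            gcongr
            exact disjointed_le B n
    _ ≤ (∑' n, Metric.ediam (B n) ^ t) * energy t μ := by gcongr

theorem measure_sq_div_energy_restrict_le_hContent (ht : 0 ≤ t) (F : Set X) :
    μ F ^ 2 / energy t (μ.restrict F) ≤ hContent t F := by
  rcases eq_or_ne (energy t (μ.restrict F)) ⊤ with hinf | hfin
  · simp [hinf]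
  refine le_iInf₂ fun C hC => ENNReal.div_le_of_le_mul ?_
  have hclosed : ∀ n, MeasurableSet (closure (C n)) := fun n => isClosed_closure.measurableSet
  have hcover : μ.restrict F (⋃ n, closure (C n))ᶜ = 0 := by
    rw [Measure.restrict_apply (MeasurableSet.iUnion hclosed).compl]
    refine measure_mono_null (fun x ⟨hx, hxF⟩ => hx ?_) measure_empty
    obtain ⟨n, hn⟩ := mem_iUnion.1 (hC hxF)
    exact mem_iUnion.2 ⟨n, subset_closure hn⟩
  calc μ F ^ 2 = μ.restrict F univ ^ 2 := by rw [Measure.restrict_apply_univ]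
    _ ≤ (∑' n, Metric.ediam (closure (C n)) ^ t) * energy t (μ.restrict F) :=
        measure_univ_sq_le_tsum_ediam_rpow_mul_energy ht hclosed hcover hfin
    _ = (∑' n, Metric.ediam (C n) ^ t) * energy t (μ.restrict F) := by
        simp_rw [Metric.ediam_closure]

end Energy

theorem stmt1_general (d : ℕ) (t : ℝ) (ht : 0 ≤ t) (E : Set (EuclideanSpace ℝ (Fin d))) :
    volume E ^ 2 / energy t (volume.restrict E) ≤ hContent t E :=
  measure_sq_div_energy_restrict_le_hContent ht E

/-- For a Lebesgue measurable set `E ⊆ ℝ^d` of positive measure and `t ≥ 0`,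
`H^t_∞(E) ≥ g_t(E) = L(E)² / I_t(E)`. -/
theorem stmt1 (d : ℕ) (t : ℝ) (ht : 0 ≤ t) (E : Set (EuclideanSpace ℝ (Fin d)))
    (hE : MeasurableSet E) (hpos : 0 < volume E) :
    volume E ^ 2 / energy t (volume.restrict E) ≤ hContent t E :=
  stmt1_general d t ht E
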